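/- Let Q = Q(δ_1,…,δ_n) = −log μ(Σ_{i=1}^n (−1)^i δ_i), where δ_1,…,δ_n are i.i.d. uniform on the standard basis {e_1,…,e_d} of Z^d and μ is the law of Y_n = Σ_{i=1}^n (−1)^i δ_i. Then Var(Q) ≤ (n/2)((log d)^2 + 2). -/

import Mathlib

/-!
By Efron–Stein it suffices to show that resampling one step `δ_j` changes `Q` by at most
`(log d)² + 2` in mean square. Write `Y = Z + w(δ_j)` with `Z` independent of `δ_j`, and for a
value `z` of `Z` put `r_c = μ(z + w_c) / P(Z = z)`. Resampling `δ_j` from `a` to `b` changes `Q` by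
`log r_a - log r_b`; moreover `d r_c ≥ 1`, since `{Z = z, δ_j = c} ⊆ {Y = z + w_c}`, and the
average of `r_c` over `c` and `z` is at most `1`, since the events `{Y = z + w_c}`, `z` varying, are
disjoint. With `u_c = log (d r_c) ≥ 0` and `L = (log d) / 2`, the mean square difference of two
independent samples of `u` is at most `2 𝔼 (u - L)²`, and the elementary bound
`(u - L)² ≤ L² + (L² + 1) e^(u - 2L) = L² + (L² + 1) r` gives `2 L² + 2 (L² + 1) = (log d)² + 2`.
-/

open MeasureTheory ProbabilityTheory

/-- The law `μ` of `Y_n = ∑_{i=1}^n (−1)^i δ_i`, where `δ_1, …, δ_n` are i.i.d.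
uniform on the standard basis vectors of `ℤ^d`. -/
noncomputable def lawY (d n : ℕ) [NeZero d] : PMF (Fin d → ℤ) :=
  PMF.map
    (fun f : Fin n → Fin d =>
      ∑ i : Fin n, ((-1 : ℤ) ^ ((i : ℕ) + 1)) • Pi.single (f i) (1 : ℤ))
    (PMF.uniformOfFintype (Fin n → Fin d))

/-- The random entropy `Q(δ_1, …, δ_n) = −log μ(Y_n)`, as a function of the i.i.d.
uniform draws `δ_i` (encoded as the indices `f i` of the chosen basis vectors). -/
noncomputable def randEntropy (d n : ℕ) [NeZero d] (f : Fin n → Fin d) : ℝ :=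
  -Real.log
    ((lawY d n
        (∑ i : Fin n, ((-1 : ℤ) ^ ((i : ℕ) + 1)) • Pi.single (f i) (1 : ℤ))).toReal)

open Finset Function
open scoped BigOperators

section Average
variable {κ : Type*} [Fintype κ] [Nonempty κ]

lemma expect_expect_sub_sq (x : κ → ℝ) :
    𝔼 a, 𝔼 b, (x a - x b) ^ 2 = 2 * (𝔼 a, x a ^ 2 - (𝔼 a, x a) ^ 2) := by
  simp only [sub_sq, expect_sub_distrib, expect_add_distrib, Fintype.expect_const, ← mul_expect,
    ← expect_mul]
  ring

lemma expect_expect_sub_sq_le (x : κ → ℝ) (L : ℝ) :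
    𝔼 a, 𝔼 b, (x a - x b) ^ 2 ≤ 2 * 𝔼 a, (x a - L) ^ 2 := by
  have h := expect_expect_sub_sq fun a => x a - L
  simp only [sub_sub_sub_cancel_right] at h
  linarith [sq_nonneg (𝔼 a, (x a - L))]

lemma sq_expect_le_expect_sq (x : κ → ℝ) : (𝔼 a, x a) ^ 2 ≤ 𝔼 a, x a ^ 2 := by
  linarith [expect_expect_sub_sq x, expect_nonneg (s := univ) fun a _ =>
    expect_nonneg (s := univ) fun b _ => sq_nonneg (x a - x b)]

end Average

section EfronStein
variable {κ : Type*} [Fintype κ] [Nonempty κ]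

omit [Nonempty κ] in
lemma expect_fin_succ_pi {n : ℕ} (φ : (Fin (n + 1) → κ) → ℝ) :
    𝔼 f, φ f = 𝔼 g : Fin n → κ, 𝔼 a, φ (Fin.cons a g) := by
  rw [← Fintype.expect_equiv (Fin.consEquiv fun _ => κ) (fun p => φ (Fin.cons p.1 p.2)) φ
    fun _ => rfl, ← univ_product_univ, expect_product, expect_comm]

theorem efron_stein {n : ℕ} (F : (Fin n → κ) → ℝ) :
    𝔼 f, F f ^ 2 - (𝔼 f, F f) ^ 2 ≤ 2⁻¹ * ∑ j, 𝔼 f, 𝔼 b, (F f - F (update f j b)) ^ 2 := by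
  induction n with
  | zero => simp
  | succ n ih =>
    set G : (Fin n → κ) → ℝ := fun g => 𝔼 a, F (Fin.cons a g)
    have total_variance : 𝔼 f, F f ^ 2 - (𝔼 f, F f) ^ 2 =
        𝔼 g, (𝔼 a, F (Fin.cons a g) ^ 2 - G g ^ 2) + (𝔼 g, G g ^ 2 - (𝔼 g, G g) ^ 2) := by
      rw [expect_fin_succ_pi, expect_fin_succ_pi, expect_sub_distrib]
      ring
    have head_term : 𝔼 g, (𝔼 a, F (Fin.cons a g) ^ 2 - G g ^ 2) =
        2⁻¹ * 𝔼 f, 𝔼 b, (F f - F (update f 0 b)) ^ 2 := by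
      rw [expect_fin_succ_pi, mul_expect]
      refine expect_congr rfl fun g _ => ?_
      simp only [Fin.update_cons_zero]
      rw [expect_expect_sub_sq]
      ring
    have tail_term (j : Fin n) : 𝔼 g, 𝔼 b, (G g - G (update g j b)) ^ 2 ≤
        𝔼 f, 𝔼 b, (F f - F (update f j.succ b)) ^ 2 := by
      rw [expect_fin_succ_pi]
      refine expect_le_expect fun g _ => ?_
      rw [expect_comm]
      refine expect_le_expect fun b _ => ?_
      simp only [G, ← Fin.cons_update, ← expect_sub_distrib]
      exact sq_expect_le_expect_sq _
    calc 𝔼 f, F f ^ 2 - (𝔼 f, F f) ^ 2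
        ≤ 2⁻¹ * 𝔼 f, 𝔼 b, (F f - F (update f 0 b)) ^ 2 +
            2⁻¹ * ∑ j : Fin n, 𝔼 f, 𝔼 b, (F f - F (update f j.succ b)) ^ 2 := by
          rw [total_variance, head_term]
          gcongr
          exact (ih G).trans (by gcongr with j; exact tail_term j)
      _ = _ := by rw [Fin.sum_univ_succ, mul_add]

end EfronStein

section Uniform
variable {α : Type*} [Fintype α] [Nonempty α] [MeasurableSpace α] [MeasurableSingletonClass α]

lemma integral_uniformOfFintype (F : α → ℝ) :
    ∫ x, F x ∂(PMF.uniformOfFintype α).toMeasure = 𝔼 x, F x := by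
  simp [PMF.integral_eq_sum, Fintype.expect_eq_sum_div_card, mul_sum, div_eq_inv_mul]

lemma variance_uniformOfFintype (F : α → ℝ) :
    variance F (PMF.uniformOfFintype α).toMeasure = 𝔼 x, F x ^ 2 - (𝔼 x, F x) ^ 2 := by
  rw [variance_eq_sub .of_discrete, integral_uniformOfFintype, integral_uniformOfFintype]
  rfl

end Uniform

section FiberCard
variable {α β : Type*} [Fintype α] [DecidableEq β]

def fiberCard (S : α → β) (y : β) : ℕ := #{x | S x = y}

lemma fiberCard_pos (S : α → β) (x : α) : 0 < fiberCard S (S x) :=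
  card_pos.2 ⟨x, by simp⟩

lemma toReal_map_uniformOfFintype_apply [Nonempty α] (S : α → β) (y : β) :
    (PMF.map S (PMF.uniformOfFintype α) y).toReal = fiberCard S y / Fintype.card α := by
  simp [PMF.map_apply, fiberCard, sum_ite, eq_comm, div_eq_mul_inv]

lemma neg_log_toReal_map_uniformOfFintype_apply [Nonempty α] (S : α → β) (x : α) :
    -Real.log (PMF.map S (PMF.uniformOfFintype α) (S x)).toReal =
      Real.log (Fintype.card α) - Real.log (fiberCard S (S x)) := by
  have := fiberCard_pos S x
  rw [toReal_map_uniformOfFintype_apply, Real.log_div (by positivity) (by positivity)]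
  ring

lemma sum_div_fiberCard (S : α → β) (φ : β → ℝ) :
    ∑ x, φ (S x) / fiberCard S (S x) = ∑ y ∈ univ.image S, φ y := by
  rw [sum_comp (fun y => φ y / fiberCard S y) S]
  refine sum_congr rfl fun y hy => ?_
  obtain ⟨x, -, rfl⟩ := mem_image.1 hy
  have := fiberCard_pos S x
  rw [nsmul_eq_mul, ← fiberCard]
  field_simp

lemma expect_fiberCard_add_div_le_one [Nonempty α] {G : Type*} [AddGroup G] [DecidableEq G]
    (S Z : α → G) (v : G) :
    𝔼 x, (fiberCard S (Z x + v) : ℝ) / fiberCard Z (Z x) ≤ 1 := by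
  rw [Fintype.expect_eq_sum_div_card, div_le_one (by positivity),
    sum_div_fiberCard Z fun z => (fiberCard S (z + v) : ℝ)]
  have : ∑ z ∈ univ.image Z, fiberCard S (z + v) = #{x | S x - v ∈ univ.image Z} := by
    simp only [fiberCard, ← sub_eq_iff_eq_add]
    exact sum_card_fiberwise_eq_card_filter _ _ _
  exact_mod_cast this ▸ card_filter_le _ _

end FiberCard

lemma sq_sub_le_add_mul_exp {L u : ℝ} (hL : 0 ≤ L) (hu : 0 ≤ u) :
    (u - L) ^ 2 ≤ L ^ 2 + (L ^ 2 + 1) * Real.exp (u - 2 * L) := by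
  rcases le_or_gt u (2 * L) with h | h
  · nlinarith [Real.exp_nonneg (u - 2 * L)]
  · set v := u - 2 * L
    have hexp : 1 + v + v ^ 2 / 2 + v ^ 3 / 6 ≤ Real.exp v := by
      have := Real.sum_le_exp_of_nonneg (x := v) (by linarith) 4
      norm_num [sum_range_succ, Nat.factorial] at this
      linarith
    have hpoly : 6 * v ^ 2 + 12 * L * v ≤ (L ^ 2 + 1) * (6 + 6 * v + 3 * v ^ 2 + v ^ 3) := by
      have hv0 : 0 ≤ v := by linarith
      nlinarith [mul_nonneg hv0 (sq_nonneg (v - 2)), sq_nonneg (v - 2),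
        mul_nonneg hv0 (sq_nonneg (L - 1)), sq_nonneg L,
        mul_nonneg (mul_nonneg hL hL) (sq_nonneg v), mul_nonneg (mul_nonneg (mul_nonneg hL hL) hv0) (sq_nonneg v)]
    nlinarith [mul_le_mul_of_nonneg_left hexp (by positivity : (0 : ℝ) ≤ L ^ 2 + 1)]

lemma expect_expect_log_sub_sq_le {κ : Type*} [Fintype κ] [Nonempty κ] {r : κ → ℝ}
    (hr : ∀ c, 1 ≤ Fintype.card κ * r c) :
    𝔼 a, 𝔼 b, (Real.log (r b) - Real.log (r a)) ^ 2 ≤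
      Real.log (Fintype.card κ) ^ 2 / 2 + (Real.log (Fintype.card κ) ^ 2 / 2 + 2) * 𝔼 c, r c := by
  set d : ℝ := (Fintype.card κ : ℝ)
  have hd : 0 < d := by positivity
  have hr0 (c : κ) : 0 < r c := pos_of_mul_pos_right (one_pos.trans_le (hr c)) hd.le
  set L := Real.log d / 2
  set u : κ → ℝ := fun c => Real.log (d * r c)
  have hlog (a b : κ) : Real.log (r b) - Real.log (r a) = u b - u a := by
    simp only [u, Real.log_mul hd.ne' (hr0 _).ne']
    ring
  have hexp (c : κ) : Real.exp (u c - 2 * L) = r c := by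
    rw [Real.exp_sub, Real.exp_log (mul_pos hd (hr0 c)), show 2 * L = Real.log d by ring,
      Real.exp_log hd]
    field_simp
  calc 𝔼 a, 𝔼 b, (Real.log (r b) - Real.log (r a)) ^ 2
      = 𝔼 a, 𝔼 b, (u a - u b) ^ 2 := by
        rw [expect_comm]
        simp only [hlog]
    _ ≤ 2 * 𝔼 c, (u c - L) ^ 2 := expect_expect_sub_sq_le u L
    _ ≤ 2 * 𝔼 c, (L ^ 2 + (L ^ 2 + 1) * r c) := by
        gcongr with c
        rw [← hexp]
        exact sq_sub_le_add_mul_exp (by positivity) (Real.log_nonneg (hr c))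
    _ = _ := by
        rw [expect_add_distrib, Fintype.expect_const, ← mul_expect]
        ring

lemma sum_apply_update {ι κ G : Type*} [Fintype ι] [DecidableEq ι] [AddCommGroup G]
    (w : ι → κ → G) (f : ι → κ) (j : ι) (c : κ) :
    ∑ i, w i (update f j c i) = ∑ i, w i (f i) - w j (f j) + w j c := by
  simp_rw [apply_update (fun i => w i), sum_update_of_mem (mem_univ j),
    sum_eq_add_sum_sdiff_singleton_of_mem (mem_univ j) fun i => w i (f i)]
  abel

section Resampling
variable {ι κ G : Type*} [Fintype ι] [DecidableEq ι] [Fintype κ] [AddCommGroup G] [DecidableEq G]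
  {S : (ι → κ) → G} {j : ι} {w : κ → G}

lemma fiberCard_sub_le (hS : ∀ f c, S (update f j c) = S f - w (f j) + w c) (z : G) (c : κ) :
    fiberCard (fun f => S f - w (f j)) z ≤ Fintype.card κ * fiberCard S (z + w c) := by
  rw [fiberCard, fiberCard, mul_comm, ← card_univ (α := κ), ← card_product]
  refine card_le_card_of_injOn (fun f => (update f j c, f j)) (fun f hf => ?_) fun f _ f' _ h => ?_
  · simp only [coe_filter, mem_univ, true_and, Set.mem_ofPred_eq] at hf
    simp [hS, hf]
  · obtain ⟨hupd, hj⟩ := Prod.mk.inj h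
    calc f = update (update f j c) j (f j) := by simp
      _ = update (update f' j c) j (f' j) := by rw [hupd, hj]
      _ = f' := by simp

variable [Nonempty κ]

lemma expect_expect_update (j : ι) (H : (ι → κ) → ℝ) :
    𝔼 f, 𝔼 c, H (update f j c) = 𝔼 f, H f := by
  have hσ : Involutive fun p : (ι → κ) × κ => (update p.1 j p.2, p.1 j) := by
    rintro ⟨f, c⟩
    simp
  calc 𝔼 f, 𝔼 c, H (update f j c)
      = 𝔼 p : (ι → κ) × κ, H (update p.1 j p.2) := by
        rw [← univ_product_univ, expect_product]
    _ = 𝔼 p : (ι → κ) × κ, H p.1 :=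
        Fintype.expect_bijective _ hσ.bijective _ _ fun _ => rfl
    _ = 𝔼 f, H f := by
        rw [← univ_product_univ, expect_product]
        simp only [Fintype.expect_const]

theorem expect_expect_log_fiberCard_update_sub_sq_le
    (hS : ∀ f c, S (update f j c) = S f - w (f j) + w c) :
    𝔼 f, 𝔼 b, (Real.log (fiberCard S (S (update f j b))) - Real.log (fiberCard S (S f))) ^ 2 ≤
      Real.log (Fintype.card κ) ^ 2 + 2 := by
  set Z : (ι → κ) → G := fun f => S f - w (f j)
  set r : (ι → κ) → κ → ℝ := fun f c => fiberCard S (Z f + w c) / fiberCard Z (Z f)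
  have hr (f : ι → κ) (c : κ) : 1 ≤ Fintype.card κ * r f c := by
    have := fiberCard_pos Z f
    rw [mul_div_assoc', le_div_iff₀ (by positivity), one_mul]
    exact_mod_cast fiberCard_sub_le hS (Z f) c
  have hr_update (f : ι → κ) (c : κ) : r (update f j c) = r f := by
    simp [r, Z, hS]
  have hlog (f : ι → κ) (b : κ) :
      Real.log (fiberCard S (S (update f j b))) - Real.log (fiberCard S (S f)) =
        Real.log (r f b) - Real.log (r f (f j)) := by
    have hM := fiberCard_pos Z f
    have hN (c : κ) : 0 < fiberCard S (Z f + w c) := by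
      rw [← hS]; exact fiberCard_pos S _
    simp only [r, Real.log_div (Nat.cast_pos.2 (hN _)).ne' (Nat.cast_pos.2 hM).ne']
    rw [hS, show S f - w (f j) = Z f from rfl,
      show S f = Z f + w (f j) from (sub_add_cancel _ _).symm]
    ring
  set D := Real.log (Fintype.card κ) ^ 2 / 2
  calc 𝔼 f, 𝔼 b, (Real.log (fiberCard S (S (update f j b))) - Real.log (fiberCard S (S f))) ^ 2
      = 𝔼 f, 𝔼 a, 𝔼 b, (Real.log (r f b) - Real.log (r f a)) ^ 2 := by
        rw [← expect_expect_update j]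
        simp only [hlog, hr_update, update_self]
    _ ≤ 𝔼 f, (D + (D + 2) * 𝔼 c, r f c) :=
        expect_le_expect fun f _ => expect_expect_log_sub_sq_le (hr f)
    _ = D + (D + 2) * 𝔼 c, 𝔼 f, r f c := by
        rw [expect_add_distrib, Fintype.expect_const, ← mul_expect, expect_comm]
    _ ≤ D + (D + 2) * 1 := by
        gcongr
        exact expect_le univ_nonempty fun c _ => expect_fiberCard_add_div_le_one S Z (w c)
    _ = Real.log (Fintype.card κ) ^ 2 + 2 := by ring

end Resampling

/-- The varentropy bound: `Var(Q) ≤ (n/2)((log d)² + 2)`. -/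
theorem variance_randEntropy_le (d n : ℕ) [NeZero d] :
    variance (randEntropy d n)
        ((PMF.uniformOfFintype (Fin n → Fin d)).toMeasure) ≤
      (n / 2 : ℝ) * ((Real.log d) ^ 2 + 2) := by
  let w (i : Fin n) (c : Fin d) : Fin d → ℤ := ((-1 : ℤ) ^ ((i : ℕ) + 1)) • Pi.single c 1
  let S (f : Fin n → Fin d) : Fin d → ℤ := ∑ i, w i (f i)
  have hQ (f : Fin n → Fin d) : randEntropy d n f =
      Real.log (Fintype.card (Fin n → Fin d)) - Real.log (fiberCard S (S f)) :=
    neg_log_toReal_map_uniformOfFintype_apply S f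
  have hcoord (j : Fin n) :
      𝔼 f, 𝔼 b, (randEntropy d n f - randEntropy d n (update f j b)) ^ 2 ≤ Real.log d ^ 2 + 2 := by
    simpa [hQ] using
      expect_expect_log_fiberCard_update_sub_sq_le fun f c => sum_apply_update w f j c
  rw [variance_uniformOfFintype]
  calc _ ≤ 2⁻¹ * ∑ j, 𝔼 f, 𝔼 b, (randEntropy d n f - randEntropy d n (update f j b)) ^ 2 :=
        efron_stein _
    _ ≤ 2⁻¹ * ∑ _j : Fin n, (Real.log d ^ 2 + 2) := by gcongr with j; exact hcoord j
    _ = _ := by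
      rw [sum_const, card_univ, Fintype.card_fin, nsmul_eq_mul]
      ring
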